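/- arXiv:2109.08971 — 5 statements merged into one kernel-verified Lean document; each statement's English description precedes it below -/
import Mathlib

section
/- Let X and Y be independent real-valued random variables, each supported on an interval, such that both P[X > Y] > 0 and P[Y > X] > 0. Then E[X | X > Y] > E[X]. -/
open MeasureTheory ProbabilityTheory

noncomputable def condExpEvent {Ω : Type*} [MeasurableSpace Ω] (μ : Measure Ω)
    (X : Ω → ℝ) (A : Set Ω) : ℝ :=
  (μ A).toReal⁻¹ * ∫ ω in A, X ω ∂μ

def IntervalSupport {Ω : Type*} [MeasurableSpace Ω] (μ : Measure Ω)
    (X : Ω → ℝ) (a b : ℝ) : Prop :=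
  a < b ∧ μ {ω | X ω ∈ Set.Icc a b} = 1 ∧
    ∀ c d : ℝ, a ≤ c → c < d → d ≤ b → 0 < μ {ω | X ω ∈ Set.Ioo c d}

noncomputable def resProb {Ω : Type*} [MeasurableSpace Ω] (μ : Measure Ω) {n : ℕ}
    (u : Fin n → Ω → ℝ) (β : Fin n → ℝ) (i : Fin n) : ENNReal :=
  μ {ω | β i * u i ω = ⨆ j, β j * u j ω}

def PDFBoundedAbove {Ω : Type*} [MeasurableSpace Ω] (μ : Measure Ω)
    (X : Ω → ℝ) (q : ℝ) : Prop :=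
  ∀ a b : ℝ, a ≤ b → μ {ω | X ω ∈ Set.Ioc a b} ≤ ENNReal.ofReal (q * (b - a))

def PDFBoundedBelowOn {Ω : Type*} [MeasurableSpace Ω] (μ : Measure Ω)
    (X : Ω → ℝ) (p a b : ℝ) : Prop :=
  ∀ c d : ℝ, a ≤ c → c ≤ d → d ≤ b → ENNReal.ofReal (p * (d - c)) ≤ μ {ω | X ω ∈ Set.Ioc c d}

/-!
Let `F(x) = P[Y < x]`. By independence and Fubini, `P[X > Y] = E[F(X)]` and
`E[X ; X > Y] = E[X F(X)]`, so the claim is `E[F(X)] E[X] < E[F(X) X]`: a strict form of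
Chebyshev's integral inequality for the comonotone pair `F(X), X`. It follows from
`2 (E[fg] - E[f] E[g]) = E[(f(ω) - f(ω')) (g(ω) - g(ω'))]` over two independent copies, whose
integrand is nonnegative and is positive whenever `X(ω) ≤ c < d ≤ X(ω')`, for points `c < d`
of the intersection of the two support intervals (where `F` is strictly increasing).
-/

open Set

section Chebyshev

variable {α : Type*} [MeasurableSpace α] {μ : Measure α} {f g : α → ℝ}

lemma integrable_prod_sub_mul_sub [IsFiniteMeasure μ] (hf : Integrable f μ)
    (hg : Integrable g μ) (hfg : Integrable (f * g) μ) :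
    Integrable (fun p : α × α => (f p.1 - f p.2) * (g p.1 - g p.2)) (μ.prod μ) := by
  have h := (((hfg.comp_fst μ).sub (hf.mul_prod hg)).sub (hg.mul_prod hf)).add (hfg.comp_snd μ)
  refine h.congr (Filter.Eventually.of_forall fun p => ?_)
  simp only [Pi.add_apply, Pi.sub_apply, Pi.mul_apply]
  ring

lemma integral_prod_sub_mul_sub [IsProbabilityMeasure μ] (hf : Integrable f μ)
    (hg : Integrable g μ) (hfg : Integrable (f * g) μ) :
    ∫ p, (f p.1 - f p.2) * (g p.1 - g p.2) ∂(μ.prod μ)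
      = 2 * (∫ x, f x * g x ∂μ - (∫ x, f x ∂μ) * ∫ x, g x ∂μ) := by
  have h₁ : Integrable (fun p : α × α => (f * g) p.1 - f p.1 * g p.2) (μ.prod μ) :=
    (hfg.comp_fst μ).sub (hf.mul_prod hg)
  have h₂ : Integrable (fun p : α × α => (f * g) p.1 - f p.1 * g p.2 - g p.1 * f p.2)
      (μ.prod μ) :=
    h₁.sub (hg.mul_prod hf)
  calc ∫ p, (f p.1 - f p.2) * (g p.1 - g p.2) ∂(μ.prod μ)
      = ∫ p, ((f * g) p.1 - f p.1 * g p.2 - g p.1 * f p.2 + (f * g) p.2) ∂(μ.prod μ) := by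
        congr 1 with p
        simp only [Pi.mul_apply]
        ring
    _ = _ := by
        rw [integral_add h₂ (hfg.comp_snd μ), integral_sub h₁ (hg.mul_prod hf),
          integral_sub (hfg.comp_fst μ) (hf.mul_prod hg), integral_fun_fst, integral_fun_snd,
          integral_prod_mul, integral_prod_mul]
        simp only [probReal_univ, one_smul, Pi.mul_apply]
        ring

theorem integral_mul_integral_lt_integral_mul_of_monovary [IsProbabilityMeasure μ]
    (hf : Integrable f μ) (hg : Integrable g μ) (hfg : Integrable (f * g) μ)
    (hmono : Monovary f g) {A B : Set α} (hA : 0 < μ A) (hB : 0 < μ B)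
    (hAB : ∀ i ∈ A, ∀ j ∈ B, f i < f j ∧ g i < g j) :
    (∫ x, f x ∂μ) * ∫ x, g x ∂μ < ∫ x, f x * g x ∂μ := by
  have hpos : 0 < ∫ p, (f p.1 - f p.2) * (g p.1 - g p.2) ∂(μ.prod μ) := by
    rw [integral_pos_iff_support_of_nonneg
      (f := fun p : α × α => (f p.1 - f p.2) * (g p.1 - g p.2))
      (fun p => hmono.sub_mul_sub_nonneg p.2 p.1)
      (integrable_prod_sub_mul_sub hf hg hfg)]
    calc 0 < μ B * μ A := ENNReal.mul_pos hB.ne' hA.ne'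
      _ = (μ.prod μ) (B ×ˢ A) := (Measure.prod_prod B A).symm
      _ ≤ _ := measure_mono fun p ⟨hj, hi⟩ => by
        obtain ⟨hfij, hgij⟩ := hAB p.2 hi p.1 hj
        exact (mul_pos (sub_pos.2 hfij) (sub_pos.2 hgij)).ne'
  rw [integral_prod_sub_mul_sub hf hg hfg] at hpos
  linarith

end Chebyshev

theorem ProbabilityTheory.IndepFun.setIntegral_comp_lt {Ω : Type*} [MeasurableSpace Ω]
    {μ : Measure Ω} [IsProbabilityMeasure μ] {X Y : Ω → ℝ} (hX : Measurable X) (hY : Measurable Y)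
    (hXY : IndepFun X Y μ) {g : ℝ → ℝ} (hg : Integrable g (μ.map X)) :
    ∫ ω in {ω | Y ω < X ω}, g (X ω) ∂μ = ∫ ω, μ.real {ω' | Y ω' < X ω} * g (X ω) ∂μ := by
  set ν := μ.map X
  set ρ := μ.map Y
  have hmap : μ.map (fun ω => (X ω, Y ω)) = ν.prod ρ :=
    (indepFun_iff_map_prod_eq_prod_map_map hX.aemeasurable hY.aemeasurable).mp hXY
  have hS : MeasurableSet {p : ℝ × ℝ | p.2 < p.1} := measurableSet_lt measurable_snd measurable_fst
  have hF : Measurable fun x => ρ.real (Iio x) :=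
    Monotone.measurable fun _ _ h => measureReal_mono (Iio_subset_Iio h)
  calc ∫ ω in {ω | Y ω < X ω}, g (X ω) ∂μ
      = ∫ p in {p : ℝ × ℝ | p.2 < p.1}, g p.1 ∂(ν.prod ρ) := by
        rw [← hmap, setIntegral_map hS (hmap ▸ hg.comp_fst ρ).aestronglyMeasurable
          (hX.prodMk hY).aemeasurable]
        rfl
    _ = ∫ x, ∫ y, (Iio x).indicator (fun _ => g x) y ∂ρ ∂ν := by
        rw [← integral_indicator hS, integral_prod _ ((hg.comp_fst ρ).indicator hS)]
        rfl
    _ = ∫ x, ρ.real (Iio x) * g x ∂ν := by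
        simp only [integral_indicator measurableSet_Iio, setIntegral_const, smul_eq_mul]
    _ = ∫ ω, μ.real {ω' | Y ω' < X ω} * g (X ω) ∂μ := by
        rw [integral_map (f := fun x => ρ.real (Iio x) * g x) hX.aemeasurable
          (hF.aestronglyMeasurable.mul hg.aestronglyMeasurable)]
        simp only [ρ, measureReal_def, Measure.map_apply hY measurableSet_Iio]
        rfl

namespace IntervalSupport

variable {Ω : Type*} [MeasurableSpace Ω] {μ : Measure Ω} [IsProbabilityMeasure μ]
  {X Y : Ω → ℝ} {a b : ℝ}

lemma ae_mem (hX : Measurable X) (h : IntervalSupport μ X a b) : ∀ᵐ ω ∂μ, X ω ∈ Icc a b :=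
  ae_iff.2 ((prob_compl_eq_zero_iff (hX measurableSet_Icc)).2 h.2.1)

lemma integrable (hX : Measurable X) (h : IntervalSupport μ X a b) : Integrable X μ :=
  Integrable.of_mem_Icc a b hX.aemeasurable (h.ae_mem hX)

lemma strictMonoOn_measureReal_lt (hX : Measurable X) (h : IntervalSupport μ X a b) :
    StrictMonoOn (fun c => μ.real {ω | X ω < c}) (Icc a b) := by
  intro c ⟨hac, _⟩ d ⟨_, hdb⟩ hcd
  have hdisj : Disjoint {ω | X ω < c} {ω | X ω ∈ Ioo c d} :=
    disjoint_left.2 fun ω hω hω' => lt_asymm hω hω'.1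
  calc μ.real {ω | X ω < c} < μ.real {ω | X ω < c} + μ.real {ω | X ω ∈ Ioo c d} :=
        lt_add_of_pos_right _
          (ENNReal.toReal_pos (h.2.2 c d hac hcd hdb).ne' (measure_ne_top _ _))
    _ = μ.real ({ω | X ω < c} ∪ {ω | X ω ∈ Ioo c d}) :=
        (measureReal_union hdisj (hX measurableSet_Ioo)).symm
    _ ≤ μ.real {ω | X ω < d} :=
        measureReal_mono (union_subset (fun ω hω => hω.trans hcd) fun ω hω => hω.2)

lemma lt_of_measure_lt_pos (hXm : Measurable X) (hYm : Measurable Y) {aX bX aY bY : ℝ}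
    (hX : IntervalSupport μ X aX bX) (hY : IntervalSupport μ Y aY bY)
    (h : 0 < μ {ω | Y ω < X ω}) : aY < bX := by
  by_contra! hle
  refine h.ne' (measure_eq_zero_iff_ae_notMem.2 ?_)
  filter_upwards [hX.ae_mem hXm, hY.ae_mem hYm] with ω hx hy
  exact not_lt.2 (hx.2.trans (hle.trans hy.1))

lemma exists_measure_pos_measureReal_lt (hYm : Measurable Y)
    {aX bX aY bY : ℝ} (hX : IntervalSupport μ X aX bX) (hY : IntervalSupport μ Y aY bY)
    (hYX : aY < bX) (hXY : aX < bY) :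
    ∃ c d, 0 < μ {ω | X ω ≤ c} ∧ 0 < μ {ω | d ≤ X ω} ∧
      μ.real {ω | Y ω < c} < μ.real {ω | Y ω < d} := by
  obtain ⟨c, hlc, hcu⟩ := exists_between (max_lt (lt_min hX.1 hXY) (lt_min hYX hY.1))
  obtain ⟨d, hcd, hdu⟩ := exists_between hcu
  obtain ⟨haXc, haYc⟩ := max_lt_iff.1 hlc
  obtain ⟨hdbX, hdbY⟩ := lt_min_iff.1 hdu
  refine ⟨c, d, ?_, ?_, hY.strictMonoOn_measureReal_lt hYm ⟨haYc.le, (hcd.trans hdbY).le⟩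
    ⟨(haYc.trans hcd).le, hdbY.le⟩ hcd⟩
  · exact (hX.2.2 _ c (le_max_left _ _) hlc (hcd.trans hdbX).le).trans_le
      (measure_mono fun ω hω => hω.2.le)
  · exact (hX.2.2 d _ (haXc.trans hcd).le hdu (min_le_left _ _)).trans_le
      (measure_mono fun ω hω => hω.1.le)

end IntervalSupport

theorem stmt0_general {Ω : Type*} [MeasurableSpace Ω] (μ : Measure Ω) [IsProbabilityMeasure μ]
    (X Y : Ω → ℝ) (hX : Measurable X) (hY : Measurable Y)
    (hindep : IndepFun X Y μ)
    (aX bX aY bY : ℝ)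
    (hXsupp : IntervalSupport μ X aX bX) (hYsupp : IntervalSupport μ Y aY bY)
    (hXY : 0 < μ {ω | X ω > Y ω}) (hYX : 0 < μ {ω | Y ω > X ω}) :
    condExpEvent μ X {ω | X ω > Y ω} > ∫ ω, X ω ∂μ := by
  set F : ℝ → ℝ := fun x => μ.real {ω | Y ω < x}
  have hF : Monotone F := fun x y hxy => measureReal_mono fun ω hω => hω.trans_le hxy
  have hXint := hXsupp.integrable hX
  have hFX : Integrable (fun ω => F (X ω)) μ :=
    .of_mem_Icc 0 1 (hF.measurable.comp hX).aemeasurable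
      (ae_of_all _ fun ω => ⟨measureReal_nonneg, measureReal_le_one⟩)
  obtain ⟨c, d, hc, hd, hcd⟩ := hXsupp.exists_measure_pos_measureReal_lt hY hYsupp
    (hXsupp.lt_of_measure_lt_pos hX hY hYsupp hXY) (hYsupp.lt_of_measure_lt_pos hY hX hXsupp hYX)
  have hcheb := integral_mul_integral_lt_integral_mul_of_monovary hFX hXint
    (hXint.bdd_mul (c := 1) hFX.aestronglyMeasurable
      (ae_of_all _ fun ω => by simp [F, abs_of_nonneg measureReal_nonneg, measureReal_le_one]))
    ((monovary_self X).comp_monotone_left hF) hc hd fun i hi j hj =>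
      ⟨(hF hi).trans_lt (hcd.trans_le (hF hj)), hi.trans_lt ((hF.reflect_lt hcd).trans_le hj)⟩
  have hprob : μ.real {ω | Y ω < X ω} = ∫ ω, F (X ω) ∂μ := by
    simpa using hindep.setIntegral_comp_lt hX hY (g := fun _ => 1) (integrable_const 1)
  have hmean : ∫ ω in {ω | Y ω < X ω}, X ω ∂μ = ∫ ω, F (X ω) * X ω ∂μ :=
    hindep.setIntegral_comp_lt hX hY (g := id)
      ((integrable_map_measure aestronglyMeasurable_id hX.aemeasurable).2 hXint)
  have hpos : 0 < ∫ ω, F (X ω) ∂μ := hprob ▸ ENNReal.toReal_pos hXY.ne' (measure_ne_top _ _)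
  change ∫ ω, X ω ∂μ < (μ.real {ω | Y ω < X ω})⁻¹ * ∫ ω in {ω | Y ω < X ω}, X ω ∂μ
  rw [hprob, hmean, inv_mul_eq_div, lt_div_iff₀ hpos, mul_comm]
  exact hcheb

theorem stmt0 {Ω : Type*} [MeasurableSpace Ω] (μ : Measure Ω) [IsProbabilityMeasure μ]
    (X Y : Ω → ℝ) (hX : Measurable X) (hY : Measurable Y)
    (hindep : IndepFun X Y μ)
    (hXatom : ∀ r : ℝ, μ {ω | X ω = r} = 0) (hYatom : ∀ r : ℝ, μ {ω | Y ω = r} = 0)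
    (aX bX aY bY : ℝ) (haX : 0 ≤ aX) (hbX : bX ≤ 1) (haY : 0 ≤ aY) (hbY : bY ≤ 1)
    (hXsupp : IntervalSupport μ X aX bX) (hYsupp : IntervalSupport μ Y aY bY)
    (hXY : 0 < μ {ω | X ω > Y ω}) (hYX : 0 < μ {ω | Y ω > X ω}) :
    condExpEvent μ X {ω | X ω > Y ω} > ∫ ω, X ω ∂μ :=
  stmt0_general μ X Y hX hY hindep aX bX aY bY hXsupp hYsupp hXY hYX
end

section
/- For each i, the function p_i : ℝ_{>0}^n → [0,1] defined by p_i(β) = P[β_i u_i = max_{j} β_j u_j] is continuous on ℝ_{>0}^n. -/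
open MeasureTheory ProbabilityTheory Filter Topology

/-! The event `{β i u i = max_j β j u j}` depends on `β` only through the finitely many
comparisons `β j u j ≤ β i u i`, which are locally constant in `β` away from the ties
`β j u j = β i u i`. For `β i ≠ 0` a tie pins the atomless variable `u i` to a value determined
by the independent variable `u j`, so ties are null, the indicators of the events converge
almost surely, and the probabilities converge. -/

lemma eq_ciSup_iff_forall_le {ι : Type*} [Finite ι] (a : ι → ℝ) (i : ι) :
    a i = ⨆ j, a j ↔ ∀ j, a j ≤ a i := by
  have : Nonempty ι := ⟨i⟩
  refine ⟨fun h j => h ▸ le_ciSup (Set.finite_range a).bddAbove j, fun h => ?_⟩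
  exact le_antisymm (le_ciSup (Set.finite_range a).bddAbove i) (ciSup_le h)

lemma eventually_forall_le_iff_of_ne {X ι : Type*} [TopologicalSpace X] [Finite ι]
    {a : X → ι → ℝ} {x₀ : X} (ha : ContinuousAt a x₀) {i : ι}
    (hties : ∀ j, j ≠ i → a x₀ j ≠ a x₀ i) :
    ∀ᶠ x in 𝓝 x₀, ((∀ j, a x j ≤ a x i) ↔ ∀ j, a x₀ j ≤ a x₀ i) := by
  have hcoord : ∀ j, Tendsto (fun x => a x j) (𝓝 x₀) (𝓝 (a x₀ j)) :=
    fun j => continuousAt_pi.1 ha j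
  by_cases hwin : ∀ j, a x₀ j ≤ a x₀ i
  · have hlt : ∀ᶠ x in 𝓝 x₀, ∀ j, j ≠ i → a x j < a x i :=
      eventually_all.2 fun j => eventually_imp_distrib_left.2 fun hj =>
        (hcoord j).eventually_lt (hcoord i) ((hwin j).lt_of_ne (hties j hj))
    filter_upwards [hlt] with x hx
    refine iff_of_true (fun j => ?_) hwin
    rcases eq_or_ne j i with rfl | hj
    · exact le_rfl
    · exact (hx j hj).le
  · obtain ⟨j, hj⟩ := not_forall.1 hwin
    filter_upwards [(hcoord i).eventually_lt (hcoord j) (not_le.1 hj)] with x hx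
    exact iff_of_false (fun h => (h j).not_gt hx) hwin

lemma ProbabilityTheory.IndepFun.measure_eq_comp_eq_zero {Ω α : Type*} [MeasurableSpace Ω]
    [MeasurableSpace α] {μ : Measure Ω} [IsFiniteMeasure μ] {X : Ω → α} {Y : Ω → ℝ}
    (hX : Measurable X) (hY : Measurable Y) (hXY : IndepFun X Y μ)
    (hatom : ∀ r, μ {ω | Y ω = r} = 0) {g : α → ℝ} (hg : Measurable g) :
    μ {ω | Y ω = g (X ω)} = 0 := by
  have hS : MeasurableSet {p : α × ℝ | p.2 = g p.1} :=
    measurableSet_eq_fun measurable_snd (hg.comp measurable_fst)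
  have hsection : ∀ x, μ.map Y {g x} = 0 := fun x => by
    rw [Measure.map_apply hY (measurableSet_singleton (g x))]
    exact hatom (g x)
  calc μ {ω | Y ω = g (X ω)}
      = μ.map (fun ω => (X ω, Y ω)) {p : α × ℝ | p.2 = g p.1} :=
        (Measure.map_apply (hX.prodMk hY) hS).symm
    _ = 0 := by
        rw [hXY.map_prod_eq_prod_map_map hX.aemeasurable hY.aemeasurable,
          Measure.prod_apply hS]
        simp [hsection]

theorem continuousAt_resProb {Ω : Type*} [MeasurableSpace Ω] {μ : Measure Ω}
    [IsFiniteMeasure μ] {n : ℕ} {u : Fin n → Ω → ℝ} (hmeas : ∀ j, Measurable (u j)) {i : Fin n}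
    (hindep : ∀ j, j ≠ i → IndepFun (u j) (u i) μ) (hatom : ∀ r, μ {ω | u i ω = r} = 0)
    {β₀ : Fin n → ℝ} (hβ₀ : β₀ i ≠ 0) :
    ContinuousAt (fun β => resProb μ u β i) β₀ := by
  have hwin : ∀ β : Fin n → ℝ, MeasurableSet {ω | β i * u i ω = ⨆ j, β j * u j ω} := fun β =>
    measurableSet_eq_fun (measurable_const.mul (hmeas i))
      (Measurable.iSup fun j => measurable_const.mul (hmeas j))
  have hno_ties : ∀ᵐ ω ∂μ, ∀ j, j ≠ i → β₀ j * u j ω ≠ β₀ i * u i ω := by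
    refine ae_all_iff.2 fun j => ?_
    rcases eq_or_ne j i with rfl | hj
    · exact ae_of_all μ fun _ h => (h rfl).elim
    have htie : μ {ω | u i ω = β₀ j / β₀ i * u j ω} = 0 :=
      (hindep j hj).measure_eq_comp_eq_zero (hmeas j) (hmeas i) hatom (measurable_const_mul _)
    filter_upwards [measure_eq_zero_iff_ae_notMem.1 htie] with ω hω _ heq
    exact hω (by field_simp; linarith)
  refine tendsto_measure_of_ae_tendsto_indicator_of_isFiniteMeasure _ (hwin β₀) hwin ?_
  filter_upwards [hno_ties] with ω hω
  have ha : ContinuousAt (fun β : Fin n → ℝ => fun j => β j * u j ω) β₀ :=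
    continuousAt_pi.2 fun j => ((continuous_apply j).mul continuous_const).continuousAt
  filter_upwards [eventually_forall_le_iff_of_ne ha hω] with β hβ
  exact (eq_ciSup_iff_forall_le (fun j => β j * u j ω) i).trans
    (hβ.trans (eq_ciSup_iff_forall_le (fun j => β₀ j * u j ω) i).symm)

theorem stmt4_general {Ω : Type*} [MeasurableSpace Ω] (μ : Measure Ω) [IsProbabilityMeasure μ]
    {n : ℕ} (u : Fin n → Ω → ℝ) (hmeas : ∀ i, Measurable (u i))
    (hindep : iIndepFun u μ)
    (hatom : ∀ i (r : ℝ), μ {ω | u i ω = r} = 0)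
    (i : Fin n) :
    ContinuousOn (fun β : Fin n → ℝ => (resProb μ u β i).toReal)
      {β : Fin n → ℝ | ∀ j, 0 < β j} := by
  intro β₀ hβ₀
  have hres : ContinuousAt (fun β => resProb μ u β i) β₀ :=
    continuousAt_resProb hmeas (fun j hj => hindep.indepFun hj) (hatom i) (hβ₀ i).ne'
  have hfin : resProb μ u β₀ i ≠ ⊤ := measure_ne_top μ _
  exact (ContinuousAt.comp (f := fun β => resProb μ u β i) (ENNReal.continuousAt_toReal hfin)
    hres).continuousWithinAt

theorem stmt4 {Ω : Type*} [MeasurableSpace Ω] (μ : Measure Ω) [IsProbabilityMeasure μ]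
    {n : ℕ} (hn : 0 < n) (u : Fin n → Ω → ℝ) (hmeas : ∀ i, Measurable (u i))
    (hindep : iIndepFun u μ)
    (hrange : ∀ i ω, u i ω ∈ Set.Icc (0:ℝ) 1)
    (hatom : ∀ i (r : ℝ), μ {ω | u i ω = r} = 0)
    (i : Fin n) :
    ContinuousOn (fun β : Fin n → ℝ => (resProb μ u β i).toReal)
      {β : Fin n → ℝ | ∀ j, 0 < β j} :=
  stmt4_general μ u hmeas hindep hatom i
end

section
/- Bounded probability change: fix a set of multipliers β ∈ ℝ_{>0}^n, an agent i with utility distribution having density bounded above by q on [0,1], and ε > 0. Let β' equal β except β'_i = (1+ε)β_i. Then p_i(β') ≤ p_i(β) + 2qε. -/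
open MeasureTheory ProbabilityTheory

/-! If agent `i` wins under `β'` but not under `β`, the best rival bid `R`, measured in units of
`β i`, satisfies `u i < R ≤ (1 + ε) u i`. Since `R` is a function of the other utilities, it is
independent of `u i`; for each fixed value `y` of `R` this confines `u i ≤ 1` to the interval
`[y / (1 + ε), min y 1]` of length at most `ε`, which has probability at most `q ε` by the density
bound. -/

open Filter Topology

lemma PDFBoundedAbove.measure_mem_Icc_le {Ω : Type*} [MeasurableSpace Ω] {μ : Measure Ω}
    {X : Ω → ℝ} {q : ℝ} (h : PDFBoundedAbove μ X q) (a b : ℝ) :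
    μ {ω | X ω ∈ Set.Icc a b} ≤ ENNReal.ofReal (q * (b - a)) := by
  rcases lt_or_ge b a with hba | hab
  · simp [Set.Icc_eq_empty_of_lt hba]
  have hlim : Tendsto (fun δ : ℝ => ENNReal.ofReal (q * (b - (a - δ)))) (𝓝[>] 0)
      (𝓝 (ENNReal.ofReal (q * (b - a)))) := by
    refine (ENNReal.continuous_ofReal.comp (by fun_prop)).tendsto' 0 _ (by simp) |>.mono_left
      nhdsWithin_le_nhds
  refine ge_of_tendsto hlim (eventually_nhdsWithin_of_forall fun δ (hδ : 0 < δ) => ?_)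
  calc μ {ω | X ω ∈ Set.Icc a b} ≤ μ {ω | X ω ∈ Set.Ioc (a - δ) b} :=
        measure_mono fun ω hω => ⟨by linarith [hω.1], hω.2⟩
    _ ≤ _ := h _ _ (by linarith)

lemma min_one_sub_div_one_add_le (y : ℝ) {ε : ℝ} (hε : 0 ≤ ε) : min y 1 - y / (1 + ε) ≤ ε := by
  have h1ε : 0 < 1 + ε := by linarith
  rw [sub_le_iff_le_add, ← sub_le_iff_le_add', le_div_iff₀ h1ε]
  rcases le_total y 1 with hy | hy
  · rw [min_eq_left hy]; nlinarith
  · rw [min_eq_right hy]; nlinarith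

lemma PDFBoundedAbove.measure_lt_and_le_one_add_mul_le {Ω : Type*} [MeasurableSpace Ω]
    {μ : Measure Ω} {X : Ω → ℝ} {q ε : ℝ} (h : PDFBoundedAbove μ X q) (hq : 0 ≤ q)
    (hε : 0 ≤ ε) (hX : ∀ ω, X ω ≤ 1) (y : ℝ) :
    μ {ω | X ω < y ∧ y ≤ (1 + ε) * X ω} ≤ ENNReal.ofReal (q * ε) := by
  have h1ε : 0 < 1 + ε := by linarith
  calc μ {ω | X ω < y ∧ y ≤ (1 + ε) * X ω}
      ≤ μ {ω | X ω ∈ Set.Icc (y / (1 + ε)) (min y 1)} := by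
        refine measure_mono fun ω ⟨hlt, hle⟩ => ⟨?_, le_min hlt.le (hX ω)⟩
        rwa [div_le_iff₀' h1ε]
    _ ≤ ENNReal.ofReal (q * ε) := (h.measure_mem_Icc_le _ _).trans <|
        ENNReal.ofReal_le_ofReal <| mul_le_mul_of_nonneg_left
          (min_one_sub_div_one_add_le y hε) hq

lemma ProbabilityTheory.IndepFun.measure_preimage_le_of_forall_slice {Ω α β : Type*}
    [MeasurableSpace Ω] [MeasurableSpace α] [MeasurableSpace β]
    {μ : Measure Ω} [IsProbabilityMeasure μ]
    {Y : Ω → α} {X : Ω → β} (hind : IndepFun Y X μ) (hY : Measurable Y) (hX : Measurable X)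
    {S : Set (α × β)} (hS : MeasurableSet S) {c : ENNReal}
    (hc : ∀ y, μ (X ⁻¹' (Prod.mk y ⁻¹' S)) ≤ c) :
    μ ((fun ω => (Y ω, X ω)) ⁻¹' S) ≤ c := by
  have := Measure.isProbabilityMeasure_map (μ := μ) hX.aemeasurable
  have := Measure.isProbabilityMeasure_map (μ := μ) hY.aemeasurable
  rw [← Measure.map_apply (hY.prodMk hX) hS,
    (indepFun_iff_map_prod_eq_prod_map_map hY.aemeasurable hX.aemeasurable).mp hind,
    Measure.prod_apply hS]
  calc ∫⁻ y, μ.map X (Prod.mk y ⁻¹' S) ∂μ.map Y ≤ ∫⁻ _, c ∂μ.map Y :=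
        lintegral_mono fun y => (Measure.map_apply hX (measurable_prodMk_left hS)).trans_le (hc y)
    _ = c := by simp

lemma PDFBoundedAbove.measure_lt_and_le_one_add_mul_le_of_indepFun {Ω : Type*}
    [MeasurableSpace Ω] {μ : Measure Ω} [IsProbabilityMeasure μ] {X Y : Ω → ℝ} {q ε : ℝ}
    (h : PDFBoundedAbove μ X q) (hq : 0 ≤ q) (hε : 0 ≤ ε) (hX1 : ∀ ω, X ω ≤ 1)
    (hind : IndepFun Y X μ) (hY : Measurable Y) (hX : Measurable X) :
    μ {ω | X ω < Y ω ∧ Y ω ≤ (1 + ε) * X ω} ≤ ENNReal.ofReal (q * ε) :=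
  hind.measure_preimage_le_of_forall_slice (S := {p | p.2 < p.1 ∧ p.1 ≤ (1 + ε) * p.2}) hY hX
    (measurableSet_lt measurable_snd measurable_fst |>.inter <|
      measurableSet_le measurable_fst (measurable_snd.const_mul _))
    (h.measure_lt_and_le_one_add_mul_le hq hε hX1)

lemma lt_ciSup_ne_and_ciSup_ne_le_of_eq_ciSup_update {ι : Type*} [Finite ι] [DecidableEq ι]
    {a : ι → ℝ} {i : ι} {c : ℝ} (h : c * a i = ⨆ j, Function.update a i (c * a i) j)
    (hne : a i ≠ ⨆ j, a j) :
    a i < ⨆ j : {j // j ≠ i}, a j ∧ ⨆ j : {j // j ≠ i}, a j ≤ c * a i := by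
  have : Nonempty ι := ⟨i⟩
  obtain ⟨k, hk⟩ := exists_eq_ciSup_of_finite (f := a)
  have hik : a i < a k := hk ▸ (le_ciSup (Set.finite_range a).bddAbove i).lt_of_ne hne
  have hki : k ≠ i := by rintro rfl; exact hik.false
  have : Nonempty {j // j ≠ i} := ⟨⟨k, hki⟩⟩
  refine ⟨hik.trans_le (le_ciSup (Set.finite_range fun j : {j // j ≠ i} => a j).bddAbove ⟨k, hki⟩),
    ciSup_le fun j => ?_⟩
  simpa [Function.update_of_ne j.2, ← h] using
    le_ciSup (Set.finite_range (Function.update a i (c * a i))).bddAbove j.1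

section RivalBid

variable {Ω : Type*} [MeasurableSpace Ω] {n : ℕ} (u : Fin n → Ω → ℝ) (β : Fin n → ℝ) (i : Fin n)

/-- For `n = 1` the supremum is over an empty type and takes the junk value `0`. -/
noncomputable def rivalBid (ω : Ω) : ℝ :=
  (⨆ j : {j // j ≠ i}, β j * u j ω) / β i

variable {u β i}

lemma measurable_rivalBid (hmeas : ∀ j, Measurable (u j)) : Measurable (rivalBid u β i) :=
  Measurable.div_const (Measurable.iSup fun j : {j // j ≠ i} => (hmeas j).const_mul (β j)) _

lemma indepFun_rivalBid {μ : Measure Ω} (hindep : iIndepFun u μ) (hmeas : ∀ j, Measurable (u j)) :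
    IndepFun (rivalBid u β i) (u i) μ := by
  have hdisj : Disjoint (Finset.univ.erase i) {i} := Finset.disjoint_singleton_right.2 (by simp)
  have hφ : Measurable fun v : ↥(Finset.univ.erase i) → ℝ =>
      (⨆ j : {j // j ≠ i}, β j * v ⟨j, Finset.mem_erase.2 ⟨j.2, Finset.mem_univ _⟩⟩) / β i :=
    Measurable.div_const (Measurable.iSup fun j : {j // j ≠ i} =>
      (measurable_pi_apply (X := fun _ : ↥(Finset.univ.erase i) => ℝ) _).const_mul (β j)) _
  exact (hindep.indepFun_finset _ _ hdisj hmeas).comp hφ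
    (measurable_pi_apply ⟨i, Finset.mem_singleton_self i⟩)

lemma resProb_update_le (μ : Measure Ω) (hβi : 0 < β i) (ε : ℝ) :
    resProb μ u (Function.update β i ((1 + ε) * β i)) i ≤ resProb μ u β i +
      μ {ω | u i ω < rivalBid u β i ω ∧ rivalBid u β i ω ≤ (1 + ε) * u i ω} := by
  refine (measure_mono fun ω (hω : _ = _) => ?_).trans (measure_union_le _ _)
  by_cases hwin : β i * u i ω = ⨆ j, β j * u j ω
  · exact Or.inl hwin
  have hupdate : (fun j => Function.update β i ((1 + ε) * β i) j * u j ω) =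
      Function.update (fun j => β j * u j ω) i ((1 + ε) * (β i * u i ω)) := by
    ext j
    rcases eq_or_ne j i with rfl | hj
    · simp [mul_assoc]
    · simp [hj]
  rw [hupdate, Function.update_self, mul_assoc] at hω
  obtain ⟨hlt, hle⟩ := lt_ciSup_ne_and_ciSup_ne_le_of_eq_ciSup_update
    (a := fun j => β j * u j ω) hω hwin
  refine Or.inr ⟨?_, ?_⟩
  · rwa [rivalBid, lt_div_iff₀ hβi, mul_comm]
  · rw [rivalBid, div_le_iff₀ hβi]
    linarith

end RivalBid

theorem stmt8_general {Ω : Type*} [MeasurableSpace Ω] (μ : Measure Ω) [IsProbabilityMeasure μ]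
    {n : ℕ} (u : Fin n → Ω → ℝ) (hmeas : ∀ i, Measurable (u i))
    (hindep : iIndepFun u μ)
    (hrange : ∀ i ω, u i ω ∈ Set.Icc (0:ℝ) 1)
    (β : Fin n → ℝ) (hβ : ∀ j, 0 < β j) (i : Fin n)
    (q ε : ℝ) (hq : 0 < q) (hε : 0 < ε)
    (hpdf : PDFBoundedAbove μ (u i) q) :
    (resProb μ u (Function.update β i ((1+ε) * β i)) i).toReal
      ≤ (resProb μ u β i).toReal + 2 * q * ε := by
  have hgap := hpdf.measure_lt_and_le_one_add_mul_le_of_indepFun hq.le hε.le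
    (fun ω => (hrange i ω).2) (indepFun_rivalBid (β := β) hindep hmeas)
    (measurable_rivalBid hmeas) (hmeas i)
  have hle := (resProb_update_le (u := u) μ (hβ i) ε).trans (add_le_add le_rfl hgap)
  calc (resProb μ u (Function.update β i ((1 + ε) * β i)) i).toReal
      ≤ (resProb μ u β i + ENNReal.ofReal (q * ε)).toReal :=
        ENNReal.toReal_mono (ENNReal.add_ne_top.2 ⟨measure_ne_top _ _, ENNReal.ofReal_ne_top⟩) hle
    _ ≤ (resProb μ u β i).toReal + q * ε := by
        grw [ENNReal.toReal_add_le, ENNReal.toReal_ofReal (by positivity)]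
    _ ≤ (resProb μ u β i).toReal + 2 * q * ε := by linarith [mul_pos hq hε]

theorem stmt8 {Ω : Type*} [MeasurableSpace Ω] (μ : Measure Ω) [IsProbabilityMeasure μ]
    {n : ℕ} (hn : 0 < n) (u : Fin n → Ω → ℝ) (hmeas : ∀ i, Measurable (u i))
    (hindep : iIndepFun u μ)
    (hrange : ∀ i ω, u i ω ∈ Set.Icc (0:ℝ) 1)
    (hatom : ∀ i (r : ℝ), μ {ω | u i ω = r} = 0)
    (β : Fin n → ℝ) (hβ : ∀ j, 0 < β j) (i : Fin n)
    (q ε : ℝ) (hq : 0 < q) (hε : 0 < ε)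
    (hpdf : PDFBoundedAbove μ (u i) q) :
    (resProb μ u (Function.update β i ((1+ε) * β i)) i).toReal
      ≤ (resProb μ u β i).toReal + 2 * q * ε :=
  stmt8_general μ u hmeas hindep hrange β hβ i q ε hq hε hpdf
end

section
/- Uniqueness of equalizing multipliers up to scaling: if β and β' in ℝ_{>0}^n both satisfy p_i(β) = p_i(β') = 1/n for all i, and the resulting-probability functions satisfy strict local monotonicity (if β'_i/β_i is the strict maximum of the ratios β'_j/β_j over some j with p_j > 0, then p_i(β') > p_i(β)), then β' = c·β for some c > 0. -/
/-! Let `i` maximise the ratio `β' i / β i`. If some ratio were strictly smaller, strict local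
monotonicity would give `p_i(β') > p_i(β)`, yet both equal `1/n`; so all ratios are equal. -/

open MeasureTheory ProbabilityTheory

theorem exists_const_mul_or_exists_div_lt_max {ι : Type*} [Finite ι] [Nonempty ι]
    {β β' : ι → ℝ} (hβ : ∀ j, 0 < β j) (hβ' : ∀ j, 0 < β' j) :
    (∃ c : ℝ, 0 < c ∧ ∀ j, β' j = c * β j) ∨
      ∃ i j, (∀ k, β' k / β k ≤ β' i / β i) ∧ β' j / β j < β' i / β i := by
  obtain ⟨i, hi⟩ := Finite.exists_max fun j => β' j / β j
  by_cases hall : ∀ j, β' j / β j = β' i / β i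
  · refine .inl ⟨β' i / β i, div_pos (hβ' i) (hβ i), fun j => ?_⟩
    rw [← hall j, div_mul_cancel₀ _ (hβ j).ne']
  · obtain ⟨j, hj⟩ := not_forall.1 hall
    exact .inr ⟨i, j, hi, (hi j).lt_of_ne hj⟩

theorem stmt11_general {Ω : Type*} [MeasurableSpace Ω] (μ : Measure Ω)
    {n : ℕ} (hn : 0 < n) (u : Fin n → Ω → ℝ)
    (hmono : ∀ (γ γ' : Fin n → ℝ) (i : Fin n), (∀ j, 0 < γ j) → (∀ j, 0 < γ' j) →
      (∀ j, γ' j / γ j ≤ γ' i / γ i) →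
      (∃ k, 0 < resProb μ u γ k ∧ γ' k / γ k < γ' i / γ i) →
      resProb μ u γ i < resProb μ u γ' i)
    (β β' : Fin n → ℝ) (hβ : ∀ j, 0 < β j) (hβ' : ∀ j, 0 < β' j)
    (heq : ∀ i, resProb μ u β i = (n : ENNReal)⁻¹)
    (heq' : ∀ i, resProb μ u β' i = (n : ENNReal)⁻¹) :
    ∃ c : ℝ, 0 < c ∧ ∀ i, β' i = c * β i := by
  have : Nonempty (Fin n) := ⟨⟨0, hn⟩⟩
  refine (exists_const_mul_or_exists_div_lt_max hβ hβ').resolve_right ?_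
  rintro ⟨i, j, hmax, hlt⟩
  have hpos : 0 < resProb μ u β j := by
    rw [heq j]
    exact ENNReal.inv_pos.2 (ENNReal.natCast_ne_top n)
  have hincr := hmono β β' i hβ hβ' hmax ⟨j, hpos, hlt⟩
  rw [heq i, heq' i] at hincr
  exact lt_irrefl _ hincr

theorem stmt11 {Ω : Type*} [MeasurableSpace Ω] (μ : Measure Ω) [IsProbabilityMeasure μ]
    {n : ℕ} (hn : 0 < n) (u : Fin n → Ω → ℝ) (hmeas : ∀ i, Measurable (u i))
    (hindep : iIndepFun u μ)
    (hrange : ∀ i ω, u i ω ∈ Set.Icc (0:ℝ) 1)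
    (hatom : ∀ i (r : ℝ), μ {ω | u i ω = r} = 0)
    (hmono : ∀ (γ γ' : Fin n → ℝ) (i : Fin n), (∀ j, 0 < γ j) → (∀ j, 0 < γ' j) →
      (∀ j, γ' j / γ j ≤ γ' i / γ i) →
      (∃ k, 0 < resProb μ u γ k ∧ γ' k / γ k < γ' i / γ i) →
      resProb μ u γ i < resProb μ u γ' i)
    (β β' : Fin n → ℝ) (hβ : ∀ j, 0 < β j) (hβ' : ∀ j, 0 < β' j)
    (heq : ∀ i, resProb μ u β i = (n : ENNReal)⁻¹)
    (heq' : ∀ i, resProb μ u β' i = (n : ENNReal)⁻¹) :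
    ∃ c : ℝ, 0 < c ∧ ∀ i, β' i = c * β i :=
  stmt11_general μ hn u hmono β β' hβ hβ' heq heq'
end

section
/- Step guarantee: let z ∈ ℤ^n, ε > 0, S ⊆ N, and let β = (1+ε)^z (componentwise) and β' = (1+ε)^{z+1_S}. Assume each agent's utility density is bounded above by q. Then for all i ∈ S: p_i(β) ≤ p_i(β') ≤ p_i(β) + 2qε, and for all i ∉ S: p_i(β) − 2qε ≤ p_i(β') ≤ p_i(β). -/
open MeasureTheory ProbabilityTheory

/-!
Let `E_β = winEvent u β i` be the event that agent `i` wins under the multipliers `β`, so that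
`p_i(β) = μ E_β`.
Passing from `β` to `β'` multiplies every ratio `β j / β i` by a factor in `[(1+ε)⁻¹, 1]` when
`i ∈ S` and in `[1, 1+ε]` when `i ∉ S`. If the ratios of the rivals of `i` do not grow, `E_β`
can only grow. If they shrink by at most the factor `1+ε`, then on `E_β' \ E_β` the value
`β i * u i` lies between `M / (1+ε)` and `M`, where `M = max_{j ≠ i} β j * u j` is independent
of `u i`. Conditioning on `M`, this confines `u i` to an interval `[t, (1+ε) t]`; as `u i ≤ 1`,
only its part below `1` matters, of length at most `ε` and hence of probability at most `qε`.
-/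

def winEvent {Ω : Type*} {n : ℕ} (u : Fin n → Ω → ℝ) (β : Fin n → ℝ) (i : Fin n) : Set Ω :=
  {ω | ∀ j, β j * u j ω ≤ β i * u i ω}

lemma mul_le_of_mem_winEvent {Ω : Type*} {n : ℕ} {u : Fin n → Ω → ℝ} {β β' : Fin n → ℝ}
    {i j : Fin n} {ω : Ω} {r : ℝ} (hω : ω ∈ winEvent u β' i) (hu : 0 ≤ u j ω) (hr : 0 ≤ r)
    (hβ'i : 0 < β' i) (h : β j * β' i ≤ r * β' j) : β j * u j ω ≤ r * u i ω := by
  refine le_of_mul_le_mul_left ?_ hβ'i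
  calc β' i * (β j * u j ω) = (β j * β' i) * u j ω := by ring
    _ ≤ (r * β' j) * u j ω := mul_le_mul_of_nonneg_right h hu
    _ = r * (β' j * u j ω) := by ring
    _ ≤ r * (β' i * u i ω) := mul_le_mul_of_nonneg_left (hω j) hr
    _ = β' i * (r * u i ω) := by ring

section

variable {Ω : Type*} [MeasurableSpace Ω] {μ : Measure Ω}

lemma resProb_eq_measure_winEvent {n : ℕ} (u : Fin n → Ω → ℝ) (β : Fin n → ℝ) (i : Fin n) :
    resProb μ u β i = μ (winEvent u β i) := by
  have : Nonempty (Fin n) := ⟨i⟩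
  unfold resProb winEvent
  congr 1
  ext ω
  have hbdd : BddAbove (Set.range fun j => β j * u j ω) := (Set.finite_range _).bddAbove
  exact ⟨fun h j => (le_ciSup hbdd j).trans h.ge,
    fun h => le_antisymm (le_ciSup hbdd i) (ciSup_le h)⟩

namespace PDFBoundedAbove

variable {X : Ω → ℝ} {q : ℝ}

lemma measure_Icc_le (hpdf : PDFBoundedAbove μ X q) (hatom : ∀ r, μ {ω | X ω = r} = 0)
    {a b : ℝ} (hab : a ≤ b) : μ {ω | X ω ∈ Set.Icc a b} ≤ ENNReal.ofReal (q * (b - a)) :=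
  calc μ {ω | X ω ∈ Set.Icc a b} ≤ μ ({ω | X ω = a} ∪ {ω | X ω ∈ Set.Ioc a b}) :=
        measure_mono fun ω ⟨ha, hb⟩ => (eq_or_lt_of_le ha).imp Eq.symm fun h => ⟨h, hb⟩
    _ ≤ μ {ω | X ω = a} + μ {ω | X ω ∈ Set.Ioc a b} := measure_union_le _ _
    _ ≤ ENNReal.ofReal (q * (b - a)) := by rw [hatom, zero_add]; exact hpdf a b hab

lemma measure_Icc_mul_le (hpdf : PDFBoundedAbove μ X q) (hatom : ∀ r, μ {ω | X ω = r} = 0)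
    (hX : ∀ ω, X ω ≤ 1) (hq : 0 ≤ q) {ε : ℝ} (hε : 0 ≤ ε) (t : ℝ) :
    μ {ω | X ω ∈ Set.Icc t ((1 + ε) * t)} ≤ ENNReal.ofReal (q * ε) := by
  -- intersected with `(-∞, 1]`, where `X` lives, the interval has width at most `ε`
  have hsub : {ω | X ω ∈ Set.Icc t ((1 + ε) * t)} ⊆
      {ω | X ω ∈ Set.Icc (min t 1) (min ((1 + ε) * t) 1)} :=
    fun ω ⟨h₁, h₂⟩ => ⟨(min_le_left _ _).trans h₁, le_min h₂ (hX ω)⟩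
  have hwidth : min ((1 + ε) * t) 1 - min t 1 ≤ ε := by
    rcases le_total t 1 with ht | ht
    · rw [min_eq_left ht]; nlinarith [min_le_left ((1 + ε) * t) 1]
    · rw [min_eq_right ht]; linarith [min_le_right ((1 + ε) * t) 1]
  rcases lt_or_ge (min ((1 + ε) * t) 1) (min t 1) with hempty | hle
  · exact (measure_mono hsub).trans (by simp [Set.Icc_eq_empty hempty.not_ge])
  calc μ {ω | X ω ∈ Set.Icc t ((1 + ε) * t)}
      ≤ μ {ω | X ω ∈ Set.Icc (min t 1) (min ((1 + ε) * t) 1)} := measure_mono hsub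
    _ ≤ ENNReal.ofReal (q * (min ((1 + ε) * t) 1 - min t 1)) := hpdf.measure_Icc_le hatom hle
    _ ≤ ENNReal.ofReal (q * ε) := ENNReal.ofReal_le_ofReal (mul_le_mul_of_nonneg_left hwidth hq)

end PDFBoundedAbove

lemma ProbabilityTheory.IndepFun.measure_setOf_prodMk_mem_le [IsProbabilityMeasure μ]
    {α γ : Type*} [MeasurableSpace α] [MeasurableSpace γ] {X : Ω → α} {Y : Ω → γ}
    (hX : Measurable X) (hY : Measurable Y) (hind : IndepFun Y X μ) {s : Set (γ × α)}
    (hs : MeasurableSet s) {C : ENNReal} (h : ∀ t, μ {ω | (t, X ω) ∈ s} ≤ C) :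
    μ {ω | (Y ω, X ω) ∈ s} ≤ C := by
  have hmap : μ.map (fun ω => (Y ω, X ω)) = (μ.map Y).prod (μ.map X) :=
    (indepFun_iff_map_prod_eq_prod_map_map hY.aemeasurable hX.aemeasurable).mp hind
  have : IsProbabilityMeasure (μ.map Y) := Measure.isProbabilityMeasure_map hY.aemeasurable
  change μ ((fun ω => (Y ω, X ω)) ⁻¹' s) ≤ C
  rw [← Measure.map_apply (hY.prodMk hX) hs, hmap, Measure.prod_apply hs]
  calc ∫⁻ t, μ.map X (Prod.mk t ⁻¹' s) ∂μ.map Y ≤ ∫⁻ _, C ∂μ.map Y :=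
        lintegral_mono fun t => (Measure.map_apply hX (measurable_prodMk_left hs)).trans_le (h t)
    _ = C := by simp

lemma PDFBoundedAbove.measure_Icc_mul_le_of_indepFun [IsProbabilityMeasure μ] {X Y : Ω → ℝ}
    {q : ℝ} (hpdf : PDFBoundedAbove μ X q) (hatom : ∀ r, μ {ω | X ω = r} = 0)
    (hX1 : ∀ ω, X ω ≤ 1) (hX : Measurable X) (hY : Measurable Y) (hind : IndepFun Y X μ)
    (hq : 0 ≤ q) {ε : ℝ} (hε : 0 ≤ ε) :
    μ {ω | X ω ∈ Set.Icc (Y ω) ((1 + ε) * Y ω)} ≤ ENNReal.ofReal (q * ε) :=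
  hind.measure_setOf_prodMk_mem_le hX hY (s := {p | p.2 ∈ Set.Icc p.1 ((1 + ε) * p.1)})
    ((measurableSet_le measurable_fst measurable_snd).inter
      (measurableSet_le measurable_snd (measurable_fst.const_mul _)))
    (hpdf.measure_Icc_mul_le hatom hX1 hq hε)

variable [IsProbabilityMeasure μ] {n : ℕ} {u : Fin n → Ω → ℝ} {q ε : ℝ} {β β' : Fin n → ℝ}
  {i : Fin n}

lemma measure_winEvent_diff_le (hmeas : ∀ j, Measurable (u j)) (hindep : iIndepFun u μ)
    (hrange : ∀ j ω, u j ω ∈ Set.Icc (0:ℝ) 1) (hatom : ∀ j (r : ℝ), μ {ω | u j ω = r} = 0)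
    (hpdf : ∀ j, PDFBoundedAbove μ (u j) q) (hq : 0 ≤ q) (hε : 0 ≤ ε)
    (hβi : 0 < β i) (hβ'i : 0 < β' i) (h : ∀ j, β j * β' i ≤ (1 + ε) * β i * β' j) :
    μ (winEvent u β' i \ winEvent u β i) ≤ ENNReal.ofReal (q * ε) := by
  set c := (1 + ε) * β i
  have hc : 0 < c := by positivity
  let M : Ω → ℝ := fun ω => ⨆ j : ({i}ᶜ : Finset (Fin n)), β j * u j ω
  have hφ : Measurable fun g : ({i}ᶜ : Finset (Fin n)) → ℝ =>
      (⨆ j : ({i}ᶜ : Finset (Fin n)), β j * g j) / c :=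
    (Measurable.iSup fun j => (measurable_pi_apply j).const_mul _).div_const c
  have hind : IndepFun (fun ω => M ω / c) (u i) μ :=
    (hindep.indepFun_finset {i}ᶜ {i} disjoint_compl_left hmeas).comp hφ
      (measurable_pi_apply (⟨i, Finset.mem_singleton_self i⟩ : ({i} : Finset (Fin n))))
  have hMc : Measurable fun ω => M ω / c := hφ.comp (measurable_pi_lambda _ fun j => hmeas j)
  have hsub : winEvent u β' i \ winEvent u β i ⊆
      {ω | u i ω ∈ Set.Icc (M ω / c) ((1 + ε) * (M ω / c))} := by
    rintro ω ⟨hwin, hlose⟩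
    obtain ⟨k, hk⟩ : ∃ k, β i * u i ω < β k * u k ω := by simpa [winEvent] using hlose
    have hki : k ≠ i := by rintro rfl; exact hk.false
    have hbdd : BddAbove (Set.range fun j : ({i}ᶜ : Finset (Fin n)) => β j * u j ω) :=
      (Set.finite_range _).bddAbove
    have hM_lower : β i * u i ω ≤ M ω := hk.le.trans (le_ciSup hbdd ⟨k, by simpa using hki⟩)
    have hM_upper : M ω ≤ c * u i ω :=
      Real.iSup_le (fun j => mul_le_of_mem_winEvent hwin (hrange j ω).1 hc.le hβ'i (h j))
        (mul_nonneg hc.le (hrange i ω).1)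
    constructor
    · rw [div_le_iff₀ hc]; linarith
    · rw [mul_div_assoc', le_div_iff₀ hc]; nlinarith
  exact (measure_mono hsub).trans ((hpdf i).measure_Icc_mul_le_of_indepFun (hatom i)
    (fun ω => (hrange i ω).2) (hmeas i) hMc hind hq hε)

lemma toReal_resProb_le_and_le_add (hmeas : ∀ j, Measurable (u j)) (hindep : iIndepFun u μ)
    (hrange : ∀ j ω, u j ω ∈ Set.Icc (0:ℝ) 1) (hatom : ∀ j (r : ℝ), μ {ω | u j ω = r} = 0)
    (hpdf : ∀ j, PDFBoundedAbove μ (u j) q) (hq : 0 ≤ q) (hε : 0 ≤ ε)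
    (hβi : 0 < β i) (hβ'i : 0 < β' i) (hmono : ∀ j, β' j * β i ≤ β' i * β j)
    (hclose : ∀ j, β j * β' i ≤ (1 + ε) * β i * β' j) :
    (resProb μ u β i).toReal ≤ (resProb μ u β' i).toReal ∧
      (resProb μ u β' i).toReal ≤ (resProb μ u β i).toReal + q * ε := by
  simp only [resProb_eq_measure_winEvent]
  have hsub : winEvent u β i ⊆ winEvent u β' i :=
    fun ω hω j => mul_le_of_mem_winEvent hω (hrange j ω).1 hβ'i.le hβi (hmono j)
  have hdiff := measure_winEvent_diff_le hmeas hindep hrange hatom hpdf hq hε hβi hβ'i hclose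
  have hle : μ (winEvent u β' i) ≤ μ (winEvent u β i) + ENNReal.ofReal (q * ε) :=
    calc μ (winEvent u β' i) ≤ μ (winEvent u β' i \ winEvent u β i) + μ (winEvent u β i) :=
          (measure_mono (Set.subset_sdiff_union _ _)).trans (measure_union_le _ _)
      _ ≤ μ (winEvent u β i) + ENNReal.ofReal (q * ε) := by
          rw [add_comm]; gcongr
  refine ⟨ENNReal.toReal_mono (measure_ne_top μ _) (measure_mono hsub), ?_⟩
  simpa [ENNReal.toReal_ofReal (mul_nonneg hq hε)] using
    ENNReal.toReal_le_add hle (measure_ne_top μ _) ENNReal.ofReal_ne_top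

lemma toReal_resProb_le_and_le_add_of_apply_eq_mul (hmeas : ∀ j, Measurable (u j))
    (hindep : iIndepFun u μ) (hrange : ∀ j ω, u j ω ∈ Set.Icc (0:ℝ) 1)
    (hatom : ∀ j (r : ℝ), μ {ω | u j ω = r} = 0) (hpdf : ∀ j, PDFBoundedAbove μ (u j) q)
    (hq : 0 ≤ q) (hε : 0 ≤ ε) (hβi : 0 < β i) (hlow : ∀ j, β j ≤ β' j)
    (hhigh : ∀ j, β' j ≤ (1 + ε) * β j) (hi : β' i = (1 + ε) * β i) :
    (resProb μ u β i).toReal ≤ (resProb μ u β' i).toReal ∧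
      (resProb μ u β' i).toReal ≤ (resProb μ u β i).toReal + q * ε :=
  toReal_resProb_le_and_le_add hmeas hindep hrange hatom hpdf hq hε hβi (by rw [hi]; positivity)
    (fun j => by rw [hi]; nlinarith [hhigh j])
    (fun j => by rw [hi, mul_comm (β j)]; exact mul_le_mul_of_nonneg_left (hlow j) (by positivity))

lemma toReal_resProb_sub_le_and_le_of_apply_eq (hmeas : ∀ j, Measurable (u j))
    (hindep : iIndepFun u μ) (hrange : ∀ j ω, u j ω ∈ Set.Icc (0:ℝ) 1)
    (hatom : ∀ j (r : ℝ), μ {ω | u j ω = r} = 0) (hpdf : ∀ j, PDFBoundedAbove μ (u j) q)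
    (hq : 0 ≤ q) (hε : 0 ≤ ε) (hβi : 0 < β i) (hlow : ∀ j, β j ≤ β' j)
    (hhigh : ∀ j, β' j ≤ (1 + ε) * β j) (hi : β' i = β i) :
    (resProb μ u β i).toReal - q * ε ≤ (resProb μ u β' i).toReal ∧
      (resProb μ u β' i).toReal ≤ (resProb μ u β i).toReal := by
  obtain ⟨h₁, h₂⟩ := toReal_resProb_le_and_le_add hmeas hindep hrange hatom hpdf hq hε
    (hi ▸ hβi) hβi (fun j => by rw [hi]; nlinarith [hlow j])
    (fun j => by rw [hi]; nlinarith [hhigh j])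
  exact ⟨by linarith, h₁⟩

end

theorem stmt12_general {Ω : Type*} [MeasurableSpace Ω] (μ : Measure Ω) [IsProbabilityMeasure μ]
    {n : ℕ} (u : Fin n → Ω → ℝ) (hmeas : ∀ i, Measurable (u i))
    (hindep : iIndepFun u μ)
    (hrange : ∀ i ω, u i ω ∈ Set.Icc (0:ℝ) 1)
    (hatom : ∀ i (r : ℝ), μ {ω | u i ω = r} = 0)
    (q ε : ℝ) (hq : 0 < q) (hε : 0 < ε)
    (hpdf : ∀ i, PDFBoundedAbove μ (u i) q)
    (z : Fin n → ℤ) (S : Finset (Fin n)) :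
    (∀ i ∈ S,
        (resProb μ u (fun j => (1+ε) ^ (z j)) i).toReal
          ≤ (resProb μ u (fun j => (1+ε) ^ (z j + if j ∈ S then 1 else 0)) i).toReal ∧
        (resProb μ u (fun j => (1+ε) ^ (z j + if j ∈ S then 1 else 0)) i).toReal
          ≤ (resProb μ u (fun j => (1+ε) ^ (z j)) i).toReal + 2 * q * ε) ∧
    (∀ i ∉ S,
        (resProb μ u (fun j => (1+ε) ^ (z j)) i).toReal - 2 * q * ε
          ≤ (resProb μ u (fun j => (1+ε) ^ (z j + if j ∈ S then 1 else 0)) i).toReal ∧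
        (resProb μ u (fun j => (1+ε) ^ (z j + if j ∈ S then 1 else 0)) i).toReal
          ≤ (resProb μ u (fun j => (1+ε) ^ (z j)) i).toReal) := by
  have hε₁ : (0:ℝ) < 1 + ε := by linarith
  set β : Fin n → ℝ := fun j => (1+ε) ^ (z j)
  set β' : Fin n → ℝ := fun j => (1+ε) ^ (z j + if j ∈ S then 1 else 0)
  have hβ : ∀ j, 0 < β j := fun j => zpow_pos hε₁ _
  have hβ' : ∀ j, β' j = (if j ∈ S then 1 + ε else 1) * β j := fun j => by
    simp only [β, β', zpow_add₀ hε₁.ne', mul_comm ((1 + ε) ^ z j)]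
    split_ifs <;> simp
  have hlow : ∀ j, β j ≤ β' j := fun j => by
    rw [hβ' j]; split_ifs <;> nlinarith [hβ j]
  have hhigh : ∀ j, β' j ≤ (1 + ε) * β j := fun j => by
    rw [hβ' j]; split_ifs <;> nlinarith [hβ j]
  have hslack : q * ε ≤ 2 * q * ε := by nlinarith
  refine ⟨fun i hi => ?_, fun i hi => ?_⟩
  · obtain ⟨h₁, h₂⟩ := toReal_resProb_le_and_le_add_of_apply_eq_mul hmeas hindep hrange hatom
      hpdf hq.le hε.le (hβ i) hlow hhigh (by rw [hβ' i, if_pos hi])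
    exact ⟨h₁, by linarith⟩
  · obtain ⟨h₁, h₂⟩ := toReal_resProb_sub_le_and_le_of_apply_eq hmeas hindep hrange hatom
      hpdf hq.le hε.le (hβ i) hlow hhigh (by rw [hβ' i, if_neg hi, one_mul])
    exact ⟨by linarith, h₂⟩

theorem stmt12 {Ω : Type*} [MeasurableSpace Ω] (μ : Measure Ω) [IsProbabilityMeasure μ]
    {n : ℕ} (hn : 0 < n) (u : Fin n → Ω → ℝ) (hmeas : ∀ i, Measurable (u i))
    (hindep : iIndepFun u μ)
    (hrange : ∀ i ω, u i ω ∈ Set.Icc (0:ℝ) 1)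
    (hatom : ∀ i (r : ℝ), μ {ω | u i ω = r} = 0)
    (q ε : ℝ) (hq : 0 < q) (hε : 0 < ε)
    (hpdf : ∀ i, PDFBoundedAbove μ (u i) q)
    (z : Fin n → ℤ) (S : Finset (Fin n)) :
    (∀ i ∈ S,
        (resProb μ u (fun j => (1+ε) ^ (z j)) i).toReal
          ≤ (resProb μ u (fun j => (1+ε) ^ (z j + if j ∈ S then 1 else 0)) i).toReal ∧
        (resProb μ u (fun j => (1+ε) ^ (z j + if j ∈ S then 1 else 0)) i).toReal
          ≤ (resProb μ u (fun j => (1+ε) ^ (z j)) i).toReal + 2 * q * ε) ∧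
    (∀ i ∉ S,
        (resProb μ u (fun j => (1+ε) ^ (z j)) i).toReal - 2 * q * ε
          ≤ (resProb μ u (fun j => (1+ε) ^ (z j + if j ∈ S then 1 else 0)) i).toReal ∧
        (resProb μ u (fun j => (1+ε) ^ (z j + if j ∈ S then 1 else 0)) i).toReal
          ≤ (resProb μ u (fun j => (1+ε) ^ (z j)) i).toReal) :=
  stmt12_general μ u hmeas hindep hrange hatom q ε hq hε hpdf z S
end
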